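/- arXiv:0708.1965 — 5 statements merged into one kernel-verified Lean document; each statement's English description precedes it below -/
import Mathlib

section
/- Let c > 1, suppose ∫₀^∞ max(1, 1/√s)·B(s) ds < ∞, and let x ↦ y(x) be a function such that ρx < y(x) ≤ x and α_{ρ,x,y(x)} ≥ c for all large x. Then lim_{x→∞} P(Y > y(x) | X > x) = 0. -/
/-
On `{X > x, Y > y}` the quadratic form `u² - 2ρuv + v²` of `(X, Y)`, which equals `R²(1 - ρ²)`,
is at least its value `(x α_{ρ,x,y})² (1 - ρ²)` at the corner `(x, y)` of the quadrant; hence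
`R ≥ α x ≥ c x > b x`. Conversely `X > x` as soon as `R > a x` and `|Θ| ≤ arccos (1/a)`, an event
of probability `(1 - F (a x)) arccos (1/a) / π`. For `1 < a < b < c` it remains to see that
`(1 - F (b x)) / (1 - F (a x)) → 0`: since `F` vanishes on `(-∞, 0]`, the Gumbel condition forces
`u w(u) → ∞`, so `b x` eventually exceeds `a x + s / w (a x)` for every fixed `s`.
-/

open MeasureTheory Filter

noncomputable def alphaRho (ρ x y : ℝ) : ℝ :=
  Real.sqrt (1 + (y / x - ρ) ^ 2 / (1 - ρ ^ 2))

open Real Topology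

/- The form is `u ^ 2 - 2 * ρ * u * v + v ^ 2`. If `ρ * u ≤ y` it increases along the segments
from `(x, y)` to `(u, y)` to `(u, v)`; otherwise even its minimum over `v`, `u ^ 2 * (1 - ρ ^ 2)`,
dominates its value at `(x, y)`. -/
lemma quadForm_le_quadForm {ρ x y u v : ℝ} (hρ0 : 0 ≤ ρ) (hρ1 : ρ < 1) (hx : 0 < x)
    (hy1 : ρ * x < y) (hy2 : y ≤ x) (hu : x ≤ u) (hv : y ≤ v) :
    x ^ 2 * (1 - ρ ^ 2) + (y - ρ * x) ^ 2 ≤ u ^ 2 * (1 - ρ ^ 2) + (v - ρ * u) ^ 2 := by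
  rcases le_or_gt (ρ * u) y with h | h
  · nlinarith [mul_nonneg (sub_nonneg.2 hv) (by linarith : 0 ≤ v + y - 2 * (ρ * u)),
      mul_nonneg (sub_nonneg.2 hu) (by nlinarith : 0 ≤ u + x - 2 * (ρ * y))]
  · have hρ : 0 < ρ := by nlinarith
    have hy : 0 < y := by nlinarith
    have h₁ : ρ ^ 2 * (x ^ 2 * (1 - ρ ^ 2) + (y - ρ * x) ^ 2) ≤ y ^ 2 * (1 - ρ ^ 2) := by
      nlinarith [mul_nonneg (sub_nonneg.2 hy1.le) (by nlinarith : 0 ≤ y + ρ * x - 2 * ρ ^ 2 * y)]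
    have h₂ : y ^ 2 * (1 - ρ ^ 2) ≤ ρ ^ 2 * (u ^ 2 * (1 - ρ ^ 2)) := by
      have hq : 0 ≤ 1 - ρ ^ 2 := by nlinarith
      calc y ^ 2 * (1 - ρ ^ 2) ≤ (ρ * u) ^ 2 * (1 - ρ ^ 2) := by gcongr
        _ = ρ ^ 2 * (u ^ 2 * (1 - ρ ^ 2)) := by ring
    nlinarith [le_of_mul_le_mul_left (h₁.trans h₂) (by positivity), sq_nonneg (v - ρ * u)]

lemma quadForm_polar {ρ : ℝ} (hρ₁ : -1 ≤ ρ) (hρ₂ : ρ ≤ 1) (r t : ℝ) :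
    (r * cos t) ^ 2 * (1 - ρ ^ 2) + (r * cos (t - arccos ρ) - ρ * (r * cos t)) ^ 2
      = r ^ 2 * (1 - ρ ^ 2) := by
  have hρ : 0 ≤ 1 - ρ ^ 2 := by nlinarith
  rw [cos_sub, cos_arccos hρ₁ hρ₂, sin_arccos]
  linear_combination (r ^ 2 * (1 - ρ ^ 2)) * sin_sq_add_cos_sq t
    + (r * sin t) ^ 2 * sq_sqrt hρ

lemma quadForm_eq_sq_mul_alphaRho {ρ x : ℝ} (hρ : ρ ^ 2 < 1) (hx : x ≠ 0) (y : ℝ) :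
    x ^ 2 * (1 - ρ ^ 2) + (y - ρ * x) ^ 2 = (x * alphaRho ρ x y) ^ 2 * (1 - ρ ^ 2) := by
  have h1 : 0 < 1 - ρ ^ 2 := by linarith
  rw [mul_pow, alphaRho, sq_sqrt (by positivity)]
  field_simp

lemma mul_alphaRho_le_abs {ρ x y r t : ℝ} (hρ0 : 0 ≤ ρ) (hρ1 : ρ < 1) (hx : 0 < x)
    (hy1 : ρ * x < y) (hy2 : y ≤ x)
    (hu : x < r * cos t) (hv : y < r * cos (t - arccos ρ)) :
    x * alphaRho ρ x y ≤ |r| := by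
  have hρ : ρ ^ 2 < 1 := by nlinarith
  have key := quadForm_le_quadForm hρ0 hρ1 hx hy1 hy2 hu.le hv.le
  rw [quadForm_polar (by linarith) hρ1.le, quadForm_eq_sq_mul_alphaRho hρ hx.ne'] at key
  exact (le_abs_self _).trans (sq_le_sq.1 (le_of_mul_le_mul_right key (by linarith)))

section

variable {Ω : Type*} [MeasurableSpace Ω] {μ : Measure Ω} {R Θ : Ω → ℝ}

lemma monotone_measureReal_le [IsFiniteMeasure μ] (R : Ω → ℝ) :
    Monotone fun t => μ.real {ω | R ω ≤ t} :=
  fun _ _ hst => measureReal_mono fun _ h => le_trans h hst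

lemma measureReal_lt_eq_one_sub [IsProbabilityMeasure μ] (hR : Measurable R) (t : ℝ) :
    μ.real {ω | t < R ω} = 1 - μ.real {ω | R ω ≤ t} := by
  rw [← probReal_compl_eq_one_sub (s := {ω | R ω ≤ t}) (hR measurableSet_Iic)]
  congr 1
  ext ω
  simp

lemma ae_pos_of_measureReal_le_zero [IsFiniteMeasure μ] (h : μ.real {ω | R ω ≤ 0} = 0) :
    ∀ᵐ ω ∂μ, 0 < R ω := by
  refine ae_iff.2 ?_
  simp only [not_lt]
  exact (measureReal_eq_zero_iff).1 h

lemma measureReal_uniform_preimage_Icc (hΘ : Measurable Θ)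
    (hΘlaw : Measure.map Θ μ = (ENNReal.ofReal (2 * π))⁻¹ • volume.restrict (Set.Ioo (-π) π))
    {θ : ℝ} (h0 : 0 ≤ θ) (hπ : θ < π) :
    μ.real (Θ ⁻¹' Set.Icc (-θ) θ) = θ / π := by
  have hsub : Set.Icc (-θ) θ ⊆ Set.Ioo (-π) π := Set.Icc_subset_Ioo (by linarith) hπ
  rw [← map_measureReal_apply hΘ measurableSet_Icc, hΘlaw, measureReal_def, Measure.smul_apply,
    Measure.restrict_apply measurableSet_Icc, Set.inter_eq_left.2 hsub, smul_eq_mul,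
    ENNReal.toReal_mul, ENNReal.toReal_inv, Real.volume_Icc, ENNReal.toReal_ofReal (by positivity),
    ENNReal.toReal_ofReal (by linarith)]
  field_simp
  ring

lemma measureReal_lt_mul_cos_ge [IsFiniteMeasure μ] (hΘ : Measurable Θ)
    (hIndep : ProbabilityTheory.IndepFun R Θ μ)
    (hΘlaw : Measure.map Θ μ = (ENNReal.ofReal (2 * π))⁻¹ • volume.restrict (Set.Ioo (-π) π))
    {a x : ℝ} (ha : 1 ≤ a) (hx : 0 ≤ x) :
    μ.real {ω | a * x < R ω} * (arccos a⁻¹ / π) ≤ μ.real {ω | x < R ω * cos (Θ ω)} := by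
  have ha0 : 0 < a := by linarith
  have hinv : a⁻¹ ≤ 1 := inv_le_one_of_one_le₀ ha
  have hsub : R ⁻¹' Set.Ioi (a * x) ∩ Θ ⁻¹' Set.Icc (-arccos a⁻¹) (arccos a⁻¹) ⊆
      {ω | x < R ω * cos (Θ ω)} := by
    rintro ω ⟨hRω, hΘω⟩
    have hcos : a⁻¹ ≤ cos (Θ ω) := by
      rw [← cos_abs, ← cos_arccos (by linarith [inv_pos.2 ha0]) hinv]
      exact cos_le_cos_of_nonneg_of_le_pi (abs_nonneg _) (arccos_le_pi _) (abs_le.2 hΘω)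
    have hRpos : 0 < R ω := (mul_nonneg ha0.le hx).trans_lt hRω
    calc x = a * x * a⁻¹ := by field_simp
      _ < R ω * a⁻¹ := by gcongr; exact hRω
      _ ≤ R ω * cos (Θ ω) := by gcongr
  calc μ.real {ω | a * x < R ω} * (arccos a⁻¹ / π)
      = μ.real (R ⁻¹' Set.Ioi (a * x) ∩ Θ ⁻¹' Set.Icc (-arccos a⁻¹) (arccos a⁻¹)) := by
        rw [measureReal_def (s := _ ∩ _),
          hIndep.measure_inter_preimage_eq_mul _ _ measurableSet_Ioi measurableSet_Icc,
          ENNReal.toReal_mul, ← measureReal_def, ← measureReal_def,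
          measureReal_uniform_preimage_Icc hΘ hΘlaw (arccos_nonneg _)
            (arccos_lt_pi.2 (by linarith [inv_pos.2 ha0]))]
        rfl
    _ ≤ μ.real {ω | x < R ω * cos (Θ ω)} := measureReal_mono hsub

lemma measureReal_quadrant_le [IsFiniteMeasure μ] {ρ b x y : ℝ} (hRpos : ∀ᵐ ω ∂μ, 0 < R ω)
    (hρ0 : 0 ≤ ρ) (hρ1 : ρ < 1) (hx : 0 < x) (hy1 : ρ * x < y) (hy2 : y ≤ x)
    (hb : b < alphaRho ρ x y) :
    μ.real {ω | x < R ω * cos (Θ ω) ∧ y < R ω * cos (Θ ω - arccos ρ)} ≤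
      μ.real {ω | b * x < R ω} := by
  refine ENNReal.toReal_mono (measure_ne_top _ _) (measure_mono_ae ?_)
  filter_upwards [hRpos] with ω hω ⟨hu, hv⟩
  have := mul_alphaRho_le_abs hρ0 hρ1 hx hy1 hy2 hu hv
  rw [abs_of_pos hω] at this
  show b * x < R ω
  nlinarith

end

lemma tendsto_mul_atTop_of_gumbel {F w : ℝ → ℝ} (hw : ∀ x, 0 < w x)
    (hF : ∀ t ≤ 0, F t = 0)
    (hGumbel : ∀ s : ℝ,
      Tendsto (fun u => (1 - F (u + s / w u)) / (1 - F u)) atTop (𝓝 (exp (-s)))) :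
    Tendsto (fun u => u * w u) atTop atTop := by
  by_contra h
  rw [tendsto_atTop] at h
  push Not at h
  obtain ⟨K, hK⟩ := h
  have hshift : ∀ u, u * w u < K → ∀ s, K ≤ s → F (u + -s / w u) = 0 := fun u hu s hs =>
    hF _ (by rw [neg_div, ← sub_eq_add_neg, sub_nonpos, le_div_iff₀ (hw u)]; linarith)
  -- below the lower endpoint the Gumbel ratio no longer depends on `s`
  have := tendsto_nhds_unique_of_frequently_eq (hGumbel (-K)) (hGumbel (-(K + 1)))
    (hK.mono fun u hu => by simp only [hshift u hu K le_rfl, hshift u hu (K + 1) (by linarith)])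
  simp only [neg_neg, exp_eq_exp] at this
  linarith

lemma tendsto_tail_ratio_zero_of_gumbel {F w : ℝ → ℝ} (hw : ∀ x, 0 < w x) (hFmono : Monotone F)
    (hFlt1 : ∀ x, F x < 1)
    (hGumbel : ∀ s : ℝ,
      Tendsto (fun u => (1 - F (u + s / w u)) / (1 - F u)) atTop (𝓝 (exp (-s))))
    (hww : Tendsto (fun u => u * w u) atTop atTop) {a b : ℝ} (ha : 0 < a) (hab : a < b) :
    Tendsto (fun x => (1 - F (b * x)) / (1 - F (a * x))) atTop (𝓝 0) := by
  have hpos : ∀ x, 0 < 1 - F x := fun x => sub_pos.2 (hFlt1 x)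
  have haT : Tendsto (a * ·) atTop atTop := tendsto_id.const_mul_atTop ha
  refine tendsto_order.2 ⟨fun e he => Eventually.of_forall fun x =>
    he.trans_le (div_nonneg (hpos _).le (hpos _).le), fun ε hε => ?_⟩
  obtain ⟨s, hs⟩ := (tendsto_exp_neg_atTop_nhds_zero.eventually (gt_mem_nhds hε)).exists
  filter_upwards [haT.eventually ((hGumbel s).eventually (gt_mem_nhds hs)),
    haT.eventually (hww.eventually_ge_atTop (s * a / (b - a))), eventually_gt_atTop 0]
    with x hlt hge hx
  have hshift : a * x + s / w (a * x) ≤ b * x := by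
    have hba : 0 < b - a := by linarith
    rw [div_le_iff₀ hba] at hge
    have : s ≤ (b - a) * x * w (a * x) := by nlinarith [hw (a * x)]
    linarith [(div_le_iff₀ (hw (a * x))).2 this]
  calc (1 - F (b * x)) / (1 - F (a * x))
      ≤ (1 - F (a * x + s / w (a * x))) / (1 - F (a * x)) := by
        gcongr
        · exact (hpos _).le
        · exact hFmono hshift
    _ < ε := hlt

theorem stmt5_general
    {Ω : Type*} [MeasurableSpace Ω] (μ : Measure Ω) [IsProbabilityMeasure μ]
    (R Θ : Ω → ℝ) (hRmeas : Measurable R) (hΘmeas : Measurable Θ)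
    (hIndep : ProbabilityTheory.IndepFun R Θ μ)
    (hΘlaw : Measure.map Θ μ =
      (ENNReal.ofReal (2 * Real.pi))⁻¹ • volume.restrict (Set.Ioo (-Real.pi) Real.pi))
    (ρ : ℝ) (hρ0 : 0 ≤ ρ) (hρ1 : ρ < 1)
    (F : ℝ → ℝ) (hFdist : ∀ t : ℝ, F t = (μ {ω | R ω ≤ t}).toReal)
    (hF0 : F 0 = 0) (hFlt1 : ∀ x : ℝ, F x < 1)
    (w : ℝ → ℝ) (hwpos : ∀ x : ℝ, 0 < w x)
    (hGumbel : ∀ s : ℝ,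
      Tendsto (fun u => (1 - F (u + s / w u)) / (1 - F u)) atTop (nhds (Real.exp (-s))))
    (c : ℝ) (hc : 1 < c)
    (y : ℝ → ℝ)
    (hy : ∀ᶠ x in atTop, ρ * x < y x ∧ y x ≤ x ∧ c ≤ alphaRho ρ x (y x)) :
    Tendsto (fun x => (μ {ω | x < R ω * Real.cos (Θ ω) ∧ y x < R ω * Real.cos (Θ ω - Real.arccos ρ)}).toReal /
      (μ {ω | x < R ω * Real.cos (Θ ω)}).toReal) atTop (nhds 0) := by
  have hFeq : F = fun t => μ.real {ω | R ω ≤ t} := funext hFdist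
  have hFmono : Monotone F := hFeq ▸ monotone_measureReal_le R
  have hFneg : ∀ t ≤ 0, F t = 0 := fun t ht =>
    le_antisymm (hF0 ▸ hFmono ht) (hFdist t ▸ ENNReal.toReal_nonneg)
  have hRpos : ∀ᵐ ω ∂μ, 0 < R ω := ae_pos_of_measureReal_le_zero ((hFdist 0).symm.trans hF0)
  have htail : ∀ t, μ.real {ω | t < R ω} = 1 - F t := fun t => by
    rw [measureReal_lt_eq_one_sub hRmeas, hFdist]
    rfl
  obtain ⟨a, b, ha, hab, hbc⟩ : ∃ a b : ℝ, 1 < a ∧ a < b ∧ b < c :=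
    ⟨(3 + c) / 4, (1 + c) / 2, by linarith, by linarith, by linarith⟩
  have hκ : 0 < arccos a⁻¹ / π := div_pos (arccos_pos.2 (inv_lt_one_of_one_lt₀ ha)) pi_pos
  have hratio := tendsto_tail_ratio_zero_of_gumbel hwpos hFmono hFlt1 hGumbel
    (tendsto_mul_atTop_of_gumbel hwpos hFneg hGumbel) (by linarith) hab
  refine squeeze_zero' (Eventually.of_forall fun x => by positivity) ?_
    (by simpa using hratio.div_const (arccos a⁻¹ / π))
  filter_upwards [hy, eventually_gt_atTop 0] with x ⟨hy1, hy2, hy3⟩ hx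
  have hnum := measureReal_quadrant_le (Θ := Θ) hRpos hρ0 hρ1 hx hy1 hy2
    (by linarith : b < alphaRho ρ x (y x))
  have hden := measureReal_lt_mul_cos_ge hΘmeas hIndep hΘlaw ha.le hx.le
  rw [htail] at hnum hden
  rw [div_div]
  exact div_le_div₀ (sub_nonneg.2 (hFlt1 _).le) hnum (mul_pos (sub_pos.2 (hFlt1 _)) hκ) hden

theorem stmt5
    {Ω : Type*} [MeasurableSpace Ω] (μ : Measure Ω) [IsProbabilityMeasure μ]
    (R Θ : Ω → ℝ) (hRmeas : Measurable R) (hΘmeas : Measurable Θ)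
    (hIndep : ProbabilityTheory.IndepFun R Θ μ)
    (hΘlaw : Measure.map Θ μ =
      (ENNReal.ofReal (2 * Real.pi))⁻¹ • volume.restrict (Set.Ioo (-Real.pi) Real.pi))
    (ρ : ℝ) (hρ0 : 0 ≤ ρ) (hρ1 : ρ < 1)
    (F : ℝ → ℝ) (hFdist : ∀ t : ℝ, F t = (μ {ω | R ω ≤ t}).toReal)
    (hF0 : F 0 = 0) (hFlt1 : ∀ x : ℝ, F x < 1)
    (w : ℝ → ℝ) (hwpos : ∀ x : ℝ, 0 < w x)
    (hGumbel : ∀ s : ℝ,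
      Tendsto (fun u => (1 - F (u + s / w u)) / (1 - F u)) atTop (nhds (Real.exp (-s))))
    (d Fstar : ℝ → ℝ) (z₀ : ℝ)
    (hFstar : ∀ x : ℝ, Fstar x = 1 - Real.exp (-(∫ s in z₀..x, w s)))
    (hdpos : ∀ x : ℝ, 0 < d x) (dlim : ℝ) (hdlim_pos : 0 < dlim)
    (hdlim : Tendsto d atTop (nhds dlim))
    (hrep : ∀ᶠ x in atTop, 1 - F x = d x * (1 - Fstar x))
    (A₁ A₂ B₁ B₂ : ℝ → ℝ)
    (hA₁meas : Measurable A₁) (hA₂meas : Measurable A₂)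
    (hB₁meas : Measurable B₁) (hB₂meas : Measurable B₂)
    (hA₁pos : ∀ u : ℝ, 0 < A₁ u) (hA₂pos : ∀ u : ℝ, 0 < A₂ u)
    (hB₁pos : ∀ x : ℝ, 0 < B₁ x) (hB₂pos : ∀ x : ℝ, 0 < B₂ x)
    (hA₁lim : Tendsto A₁ atTop (nhds 0)) (hA₂lim : Tendsto A₂ atTop (nhds 0))
    (hB₁bdd : ∀ K : ℝ, ∃ M : ℝ, ∀ x ∈ Set.Icc (0 : ℝ) K, B₁ x ≤ M)
    (hB₂bdd : ∀ K : ℝ, ∃ M : ℝ, ∀ x ∈ Set.Icc (0 : ℝ) K, B₂ x ≤ M)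
    (hA1 : ∃ u₁ : ℝ, ∀ u ≥ u₁, ∀ x ≥ (0 : ℝ),
      |(1 - Fstar (u + x / w u)) / (1 - Fstar u) - Real.exp (-x)| ≤ A₁ u * B₁ x ∧
      |d (u + x / w u) - d u| ≤ A₂ u * B₂ x)
    (c : ℝ) (hc : 1 < c)
    (hBint : IntegrableOn
      (fun s => max 1 (1 / Real.sqrt s) * (B₁ s + Real.exp (-s) * B₂ s)) (Set.Ioi (0 : ℝ)))
    (y : ℝ → ℝ)
    (hy : ∀ᶠ x in atTop, ρ * x < y x ∧ y x ≤ x ∧ c ≤ alphaRho ρ x (y x)) :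
    Tendsto (fun x => (μ {ω | x < R ω * Real.cos (Θ ω) ∧ y x < R ω * Real.cos (Θ ω - Real.arccos ρ)}).toReal /
      (μ {ω | x < R ω * Real.cos (Θ ω)}).toReal) atTop (nhds 0) :=
  stmt5_general μ R Θ hRmeas hΘmeas hIndep hΘlaw ρ hρ0 hρ1 F hFdist hF0 hFlt1 w hwpos hGumbel c hc y
    hy
end

section
/- For every ρ ∈ [0,1), every x > 0 and every y with ρx < y ≤ x, defining α := α_{ρ,x,y} and β := α·x/y, one has P(S₁ > x, ρS₁ + √(1−ρ²)S₂ > y) = (1/(2π))·[I(α, x) + I(β, y)]. -/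
open MeasureTheory Filter

noncomputable def tailI (F : ℝ → ℝ) (a x : ℝ) : ℝ :=
  ∫ s in Set.Ioi a, (1 - F (x * s)) / (s * Real.sqrt (s ^ 2 - 1))

/-!
With φ = arccos ρ the event is {x < R cos Θ, y < R cos (Θ - φ)}. For R = r > x the admissible
angles in (-π, π) form the interval (φ - arccos (y/r), arccos (x/r)); for r ≤ x there are none.
The choice of α makes arccos (1/α) + arccos (1/β) = φ, which splits the (positive part of the)
length of this interval into (arccos (x/r) - arccos (1/α))⁺ + (arccos (y/r) - arccos (1/β))⁺, both
terms vanishing exactly when r ≤ α x. As s ↦ arccos (1/s) has derivative 1/(s √(s² - 1)), the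
first term is ∫_α^{r/x} ds/(s √(s² - 1)), and integrating over r by Tonelli gives
∫_α^∞ P(R > x s) ds/(s √(s² - 1)) = I(α, x); likewise for the second term.
-/

open Real Set

lemma lt_cos_iff_abs_lt_arccos {c t : ℝ} (hc₀ : -1 ≤ c) (hc₁ : c ≤ 1) (ht : |t| ≤ π) :
    c < cos t ↔ |t| < arccos c := by
  nth_rewrite 1 [← cos_arccos hc₀ hc₁]
  rw [← cos_abs t]
  exact strictAntiOn_cos.lt_iff_gt ⟨arccos_nonneg c, arccos_le_pi c⟩ ⟨abs_nonneg t, ht⟩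

lemma arccos_le_arccos_add_arccos {ρ p q : ℝ} (hρ₀ : 0 ≤ ρ) (hρ₁ : ρ ≤ 1) (hp₀ : 0 ≤ p)
    (hp₁ : p ≤ 1) (h : ρ * p ≤ q) : arccos q ≤ arccos ρ + arccos p := by
  have hsum : arccos ρ + arccos p ≤ π := by
    linarith [arccos_le_pi_div_two.2 hρ₀, arccos_le_pi_div_two.2 hp₀]
  have hcos : cos (arccos ρ + arccos p) ≤ q := by
    rw [cos_add, cos_arccos (by linarith) hρ₁, cos_arccos (by linarith) hp₁, sin_arccos,
      sin_arccos]
    nlinarith [sqrt_nonneg (1 - ρ ^ 2), sqrt_nonneg (1 - p ^ 2)]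
  calc arccos q ≤ arccos (cos (arccos ρ + arccos p)) := arccos_le_arccos hcos
    _ = arccos ρ + arccos p := arccos_cos (add_nonneg (arccos_nonneg ρ) (arccos_nonneg p)) hsum

lemma mul_cos_sub_arccos {ρ : ℝ} (hρ₀ : -1 ≤ ρ) (hρ₁ : ρ ≤ 1) (r θ : ℝ) :
    r * cos (θ - arccos ρ) = ρ * (r * cos θ) + √(1 - ρ ^ 2) * (r * sin θ) := by
  rw [cos_sub, cos_arccos hρ₀ hρ₁, sin_arccos]
  ring

lemma Ioo_inter_setOf_lt_cos_and_lt_cos_sub {ρ p q : ℝ} (hρ₀ : 0 ≤ ρ) (hρ₁ : ρ ≤ 1)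
    (hp₀ : 0 < p) (hp₁ : p < 1) (hq₀ : 0 < q) (hq₁ : q < 1) (hpq : ρ * p ≤ q) (hqp : ρ * q ≤ p) :
    Ioo (-π) π ∩ {θ | p < cos θ ∧ q < cos (θ - arccos ρ)} =
      Ioo (arccos ρ - arccos q) (arccos p) := by
  have hφ : arccos ρ ≤ π / 2 := arccos_le_pi_div_two.2 hρ₀
  have hA : arccos p < π / 2 := arccos_lt_pi_div_two.2 hp₀
  have hB : arccos q < π / 2 := arccos_lt_pi_div_two.2 hq₀
  have hBA := arccos_le_arccos_add_arccos hρ₀ hρ₁ hp₀.le hp₁.le hpq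
  have hAB := arccos_le_arccos_add_arccos hρ₀ hρ₁ hq₀.le hq₁.le hqp
  have := arccos_nonneg ρ
  ext θ
  simp only [mem_inter_iff, mem_Ioo, mem_ofPred_eq]
  constructor
  · rintro ⟨⟨hθ₀, hθ₁⟩, hpθ, hqθ⟩
    have hθ : |θ| < arccos p := (lt_cos_iff_abs_lt_arccos (by linarith) hp₁.le
      (abs_le.2 ⟨hθ₀.le, hθ₁.le⟩)).1 hpθ
    have hθφ : |θ - arccos ρ| < arccos q := (lt_cos_iff_abs_lt_arccos (by linarith) hq₁.le
      (abs_le.2 ⟨by linarith [neg_abs_le θ], by linarith [le_abs_self θ]⟩)).1 hqθ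
    exact ⟨by linarith [neg_abs_le (θ - arccos ρ)], by linarith [le_abs_self θ]⟩
  · rintro ⟨hθ₀, hθ₁⟩
    have hθ : |θ| < arccos p := abs_lt.2 ⟨by linarith, hθ₁⟩
    have hθφ : |θ - arccos ρ| < arccos q := abs_lt.2 ⟨by linarith, by linarith⟩
    refine ⟨⟨by linarith [pi_gt_three], by linarith [pi_gt_three]⟩,
      (lt_cos_iff_abs_lt_arccos (by linarith) hp₁.le (by linarith [pi_gt_three])).2 hθ,
      (lt_cos_iff_abs_lt_arccos (by linarith) hq₁.le (by linarith [pi_gt_three])).2 hθφ⟩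

lemma volume_Ioo_inter_setOf_lt_mul_cos {ρ x y r : ℝ} (hρ₀ : 0 ≤ ρ) (hρ₁ : ρ ≤ 1) (hx : 0 < x)
    (hxy : ρ * x < y) (hyx : y ≤ x) (hr : 0 < r) :
    volume (Ioo (-π) π ∩ {θ | x < r * cos θ ∧ y < r * cos (θ - arccos ρ)}) =
      ENNReal.ofReal (arccos (x / r) + arccos (y / r) - arccos ρ) := by
  have hy : 0 < y := (mul_nonneg hρ₀ hx.le).trans_lt hxy
  rcases le_or_gt r x with hrx | hxr
  · have hempty : {θ | x < r * cos θ ∧ y < r * cos (θ - arccos ρ)} = ∅ :=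
      eq_empty_of_forall_notMem fun θ ⟨h, _⟩ => by nlinarith [cos_le_one θ]
    have hA : arccos (x / r) = 0 := arccos_eq_zero.2 ((one_le_div hr).2 hrx)
    have hB : arccos (y / r) ≤ arccos ρ :=
      arccos_le_arccos ((le_div_iff₀ hr).2 (by nlinarith))
    rw [hempty, inter_empty, measure_empty, hA, ENNReal.ofReal_of_nonpos (by linarith)]
  · have hset : {θ | x < r * cos θ ∧ y < r * cos (θ - arccos ρ)} =
        {θ | x / r < cos θ ∧ y / r < cos (θ - arccos ρ)} := by
      simp only [div_lt_iff₀' hr]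
    rw [hset, Ioo_inter_setOf_lt_cos_and_lt_cos_sub hρ₀ hρ₁ (by positivity)
      ((div_lt_one hr).2 hxr) (by positivity) ((div_lt_one hr).2 (hyx.trans_lt hxr)) _ _,
      volume_Ioo]
    · ring_nf
    · rw [← mul_div_assoc]; gcongr
    · rw [← mul_div_assoc]; gcongr; nlinarith

lemma ofReal_arccos_add_arccos_sub {x y c r φ : ℝ} (hx : 0 < x) (hy : 0 < y) (hc : 0 < c)
    (hr : 0 < r) (hφ : arccos (x / c) + arccos (y / c) = φ) :
    ENNReal.ofReal (arccos (x / r) + arccos (y / r) - φ) =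
      ENNReal.ofReal (arccos (x / r) - arccos (x / c)) +
        ENNReal.ofReal (arccos (y / r) - arccos (y / c)) := by
  subst hφ
  rcases le_total r c with hrc | hcr
  · have hA : arccos (x / r) ≤ arccos (x / c) := arccos_le_arccos (by gcongr)
    have hB : arccos (y / r) ≤ arccos (y / c) := arccos_le_arccos (by gcongr)
    simp only [ENNReal.ofReal_of_nonpos (sub_nonpos.2 hA), ENNReal.ofReal_of_nonpos
      (sub_nonpos.2 hB), add_zero, ENNReal.ofReal_eq_zero]
    linarith
  · have hA : arccos (x / c) ≤ arccos (x / r) := arccos_le_arccos (by gcongr)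
    have hB : arccos (y / c) ≤ arccos (y / r) := arccos_le_arccos (by gcongr)
    rw [← ENNReal.ofReal_add (sub_nonneg.2 hA) (sub_nonneg.2 hB)]
    ring_nf

lemma one_lt_alphaRho {ρ x y : ℝ} (hρ : ρ ^ 2 < 1) (hyx : y / x ≠ ρ) : 1 < alphaRho ρ x y := by
  refine (lt_sqrt zero_le_one).2 ?_
  have := sub_ne_zero.2 hyx
  have := sub_pos.2 hρ
  rw [one_pow, lt_add_iff_pos_right]
  positivity

lemma arccos_inv_alphaRho_add_arccos {ρ x y : ℝ} (hρ₀ : 0 ≤ ρ) (hρ₁ : ρ < 1) (hx : 0 < x)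
    (hxy : ρ * x < y) (hyx : ρ * y < x) :
    arccos (alphaRho ρ x y)⁻¹ + arccos (y / (alphaRho ρ x y * x)) = arccos ρ := by
  set α := alphaRho ρ x y
  obtain ⟨s, hs₀, hs⟩ : ∃ s : ℝ, 0 < s ∧ s ^ 2 = 1 - ρ ^ 2 :=
    ⟨√(1 - ρ ^ 2), sqrt_pos.2 (by nlinarith), sq_sqrt (by nlinarith)⟩
  have hy : 0 < y := (mul_nonneg hρ₀ hx.le).trans_lt hxy
  have hα_sq : α ^ 2 = 1 + (y / x - ρ) ^ 2 / s ^ 2 := by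
    rw [hs]; exact sq_sqrt (by rw [← hs]; positivity)
  have hα : α ^ 2 * (s ^ 2 * x ^ 2) = s ^ 2 * x ^ 2 + (y - ρ * x) ^ 2 := by
    rw [hα_sq]; field_simp
  have hα₁ : 1 < α := one_lt_alphaRho (by nlinarith) ((lt_div_iff₀ hx).2 hxy).ne'
  have hα₀ : 0 < α := one_pos.trans hα₁
  have hu₁ : α⁻¹ ≤ 1 := inv_le_one_of_one_le₀ hα₁.le
  have hv₁ : y / (α * x) ≤ 1 := by
    have : (α * x) ^ 2 * s ^ 2 - y ^ 2 * s ^ 2 = (x - ρ * y) ^ 2 := by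
      linear_combination hα + (x ^ 2 - y ^ 2) * hs
    have : y ^ 2 ≤ (α * x) ^ 2 := le_of_mul_le_mul_right (by nlinarith) (pow_pos hs₀ 2)
    exact (div_le_one (by positivity)).2
      ((pow_le_pow_iff_left₀ hy.le (by positivity) two_ne_zero).1 this)
  have hsin_u : √(1 - α⁻¹ ^ 2) = (y - ρ * x) / (s * α * x) := by
    rw [show 1 - α⁻¹ ^ 2 = ((y - ρ * x) / (s * α * x)) ^ 2 by field_simp; linear_combination hα]
    exact sqrt_sq (div_nonneg (by linarith) (by positivity))
  have hsin_v : √(1 - (y / (α * x)) ^ 2) = (x - ρ * y) / (s * α * x) := by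
    rw [show 1 - (y / (α * x)) ^ 2 = ((x - ρ * y) / (s * α * x)) ^ 2 by
      field_simp; linear_combination hα + (x ^ 2 - y ^ 2) * hs]
    exact sqrt_sq (div_nonneg (by linarith) (by positivity))
  refine (arccos_eq_of_eq_cos (add_nonneg (arccos_nonneg _) (arccos_nonneg _)) ?_ ?_).symm
  · linarith [arccos_le_pi_div_two.2 (inv_pos.2 hα₀).le,
      arccos_le_pi_div_two.2 (show 0 ≤ y / (α * x) by positivity)]
  · rw [cos_add, cos_arccos (by linarith [inv_pos.2 hα₀]) hu₁,
      cos_arccos (by linarith [show 0 ≤ y / (α * x) by positivity]) hv₁, sin_arccos, sin_arccos,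
      hsin_u, hsin_v]
    field_simp
    linear_combination ρ * hα + (ρ * x ^ 2 - y * x) * hs

lemma hasDerivAt_arccos_inv {s : ℝ} (hs : 1 < s) :
    HasDerivAt (fun t : ℝ => arccos t⁻¹) (1 / (s * √(s ^ 2 - 1))) s := by
  have hs₀ : 0 < s := one_pos.trans hs
  have hsqrt : √(1 - s⁻¹ ^ 2) = √(s ^ 2 - 1) / s := by
    rw [show 1 - s⁻¹ ^ 2 = (s ^ 2 - 1) / s ^ 2 by field_simp, sqrt_div (by nlinarith),
      sqrt_sq hs₀.le]
  have : 0 < √(s ^ 2 - 1) := sqrt_pos.2 (by nlinarith)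
  refine ((hasDerivAt_arccos (by linarith [inv_pos.2 hs₀]) (inv_lt_one_of_one_lt₀ hs).ne).comp s
    (hasDerivAt_inv hs₀.ne')).congr_deriv ?_
  rw [hsqrt]
  field_simp

lemma continuousOn_one_div_mul_sqrt_sq_sub_one {a b : ℝ} (ha : 1 < a) :
    ContinuousOn (fun s : ℝ => 1 / (s * √(s ^ 2 - 1))) (Icc a b) := by
  refine continuousOn_const.div (by fun_prop) fun s hs => ?_
  have : 0 < √(s ^ 2 - 1) := sqrt_pos.2 (by nlinarith [ha.trans_le hs.1])
  nlinarith [ha.trans_le hs.1]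

lemma lintegral_Ioo_one_div_mul_sqrt_sq_sub_one {a b : ℝ} (ha : 1 < a) (hb : 0 < b) :
    ∫⁻ s in Ioo a b, ENNReal.ofReal (1 / (s * √(s ^ 2 - 1))) =
      ENNReal.ofReal (arccos b⁻¹ - arccos a⁻¹) := by
  rcases le_or_gt b a with hba | hab
  · rw [Ioo_eq_empty hba.not_gt, Measure.restrict_empty, lintegral_zero_measure, eq_comm,
      ENNReal.ofReal_eq_zero, sub_nonpos]
    exact arccos_le_arccos (inv_anti₀ hb hba)
  have hcont := continuousOn_one_div_mul_sqrt_sq_sub_one (b := b) ha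
  have hFTC : ∫ s in a..b, 1 / (s * √(s ^ 2 - 1)) = arccos b⁻¹ - arccos a⁻¹ := by
    refine intervalIntegral.integral_eq_sub_of_hasDerivAt (f := fun t => arccos t⁻¹)
      (fun t ht => ?_) (hcont.intervalIntegrable_of_Icc hab.le)
    rw [uIcc_of_le hab.le] at ht
    exact hasDerivAt_arccos_inv (ha.trans_le ht.1)
  have hnonneg : 0 ≤ᵐ[volume.restrict (Ioo a b)] fun s : ℝ => 1 / (s * √(s ^ 2 - 1)) :=
    (ae_restrict_iff' measurableSet_Ioo).2 (ae_of_all _ fun s hs => by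
      have := ha.trans hs.1; positivity)
  rw [← ofReal_integral_eq_lintegral_ofReal
    (hcont.integrableOn_Icc.mono_set Ioo_subset_Icc_self) hnonneg, ← hFTC,
    intervalIntegral.integral_of_le hab.le, integral_Ioc_eq_integral_Ioo]

noncomputable def tailLIntegral (ν : Measure ℝ) (a z : ℝ) : ENNReal :=
  ∫⁻ s in Ioi a, ν (Ioi (z * s)) * ENNReal.ofReal (1 / (s * √(s ^ 2 - 1)))

lemma lintegral_ofReal_arccos_div_sub (ν : Measure ℝ) [SFinite ν] (hν : ∀ᵐ r ∂ν, 0 < r)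
    {z a : ℝ} (hz : 0 < z) (ha : 1 < a) :
    ∫⁻ r, ENNReal.ofReal (arccos (z / r) - arccos a⁻¹) ∂ν = tailLIntegral ν a z := by
  set g : ℝ → ENNReal := fun s => ENNReal.ofReal (1 / (s * √(s ^ 2 - 1)))
  have hg : Measurable g := by unfold g; fun_prop
  calc ∫⁻ r, ENNReal.ofReal (arccos (z / r) - arccos a⁻¹) ∂ν
      = ∫⁻ r, (∫⁻ s in Ioi a, (Ioi (z * s)).indicator (fun _ => g s) r) ∂ν := by
        refine lintegral_congr_ae ?_
        filter_upwards [hν] with r hr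
        have hind : ∀ s, (Ioi (z * s)).indicator (fun _ => g s) r = (Iio (r / z)).indicator g s :=
          fun s => by simp only [indicator, mem_Ioi, mem_Iio, lt_div_iff₀ hz, mul_comm]
        simp only [hind]
        rw [lintegral_indicator measurableSet_Iio, Measure.restrict_restrict measurableSet_Iio,
          Iio_inter_Ioi, lintegral_Ioo_one_div_mul_sqrt_sq_sub_one ha (div_pos hr hz), inv_div]
    _ = ∫⁻ s in Ioi a, ∫⁻ r, (Ioi (z * s)).indicator (fun _ => g s) r ∂ν :=
        lintegral_lintegral_swap (f := fun r s => (Ioi (z * s)).indicator (fun _ => g s) r)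
          ((hg.comp measurable_snd).indicator
          (measurableSet_lt (measurable_snd.const_mul z) measurable_fst)).aemeasurable
    _ = tailLIntegral ν a z := by
        simp only [lintegral_indicator_const measurableSet_Ioi, mul_comm, tailLIntegral, g]

lemma tailI_eq_toReal_tailLIntegral (ν : Measure ℝ) [IsProbabilityMeasure ν] {F : ℝ → ℝ}
    (hF : ∀ t, F t = ν.real (Iic t)) {a : ℝ} (ha : 0 ≤ a) (z : ℝ) :
    tailI F a z = (tailLIntegral ν a z).toReal := by
  have hmeas : Measurable fun s : ℝ =>
      ν (Ioi (z * s)) * ENNReal.ofReal (1 / (s * √(s ^ 2 - 1))) :=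
    ((Antitone.measurable fun _ _ h => measure_mono (Ioi_subset_Ioi h)).comp
      (measurable_const_mul z)).mul (by fun_prop)
  rw [tailLIntegral, ← integral_toReal hmeas.aemeasurable
    (ae_of_all _ fun s => ENNReal.mul_lt_top (measure_lt_top ν _) ENNReal.ofReal_lt_top)]
  refine setIntegral_congr_fun measurableSet_Ioi fun s hs => ?_
  have : 0 < s := ha.trans_lt hs
  rw [ENNReal.toReal_mul, ENNReal.toReal_ofReal (by positivity), ← measureReal_def, ← compl_Iic,
    probReal_compl_eq_one_sub measurableSet_Iic, ← hF, div_eq_mul_one_div]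

noncomputable def uniformAngle : Measure ℝ :=
  (ENNReal.ofReal (2 * π))⁻¹ • volume.restrict (Ioo (-π) π)

instance : IsProbabilityMeasure uniformAngle where
  measure_univ := by
    rw [uniformAngle, Measure.smul_apply, Measure.restrict_apply_univ, Real.volume_Ioo, smul_eq_mul,
      sub_neg_eq_add, ← two_mul, ENNReal.inv_mul_cancel (by simp [pi_pos]) ENNReal.ofReal_ne_top]

lemma measurableSet_setOf_lt_mul_cos_and_lt_mul_cos_sub (x y φ : ℝ) :
    MeasurableSet {p : ℝ × ℝ | x < p.1 * cos p.2 ∧ y < p.1 * cos (p.2 - φ)} :=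
  (measurableSet_lt measurable_const (by fun_prop : Measurable fun p : ℝ × ℝ =>
    p.1 * cos p.2)).inter (measurableSet_lt measurable_const
    (by fun_prop : Measurable fun p : ℝ × ℝ => p.1 * cos (p.2 - φ)))

lemma prod_uniformAngle_setOf_lt_mul_cos_and_lt_mul_cos_sub (ν : Measure ℝ) [SFinite ν]
    (hν : ∀ᵐ r ∂ν, 0 < r) {ρ x y : ℝ} (hρ₀ : 0 ≤ ρ) (hρ₁ : ρ < 1) (hx : 0 < x)
    (hxy : ρ * x < y) (hyx : y ≤ x) :
    ν.prod uniformAngle {p : ℝ × ℝ | x < p.1 * cos p.2 ∧ y < p.1 * cos (p.2 - arccos ρ)} =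
      (ENNReal.ofReal (2 * π))⁻¹ * (tailLIntegral ν (alphaRho ρ x y) x +
        tailLIntegral ν (alphaRho ρ x y * x / y) y) := by
  set α := alphaRho ρ x y
  have hy : 0 < y := (mul_nonneg hρ₀ hx.le).trans_lt hxy
  have hangle := arccos_inv_alphaRho_add_arccos hρ₀ hρ₁ hx hxy (by nlinarith)
  have hα : 1 < α := one_lt_alphaRho (by nlinarith) ((lt_div_iff₀ hx).2 hxy).ne'
  have hβ : 1 < α * x / y := (one_lt_div hy).2 (by nlinarith)
  have hαinv : x / (α * x) = α⁻¹ := by field_simp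
  have hsection : ∀ᵐ r ∂ν, uniformAngle
      (Prod.mk r ⁻¹' {p : ℝ × ℝ | x < p.1 * cos p.2 ∧ y < p.1 * cos (p.2 - arccos ρ)}) =
      (ENNReal.ofReal (2 * π))⁻¹ * (ENNReal.ofReal (arccos (x / r) - arccos α⁻¹) +
        ENNReal.ofReal (arccos (y / r) - arccos (α * x / y)⁻¹)) := by
    filter_upwards [hν] with r hr
    rw [uniformAngle, Measure.smul_apply, smul_eq_mul, Measure.restrict_apply' measurableSet_Ioo,
      inter_comm, preimage_ofPred_eq, volume_Ioo_inter_setOf_lt_mul_cos hρ₀ hρ₁.le hx hxy hyx hr,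
      inv_div,
      ← hαinv, ofReal_arccos_add_arccos_sub hx hy (by positivity) hr (hαinv ▸ hangle)]
  rw [Measure.prod_apply (measurableSet_setOf_lt_mul_cos_and_lt_mul_cos_sub x y _),
    lintegral_congr_ae hsection, lintegral_const_mul' _ _ (ENNReal.inv_ne_top.2 (by simp [pi_pos])),
    lintegral_add_left (by fun_prop), lintegral_ofReal_arccos_div_sub ν hν hx hα,
    lintegral_ofReal_arccos_div_sub ν hν hy hβ]

lemma measureReal_prod_uniformAngle_setOf_lt_mul_cos_and_lt_mul_cos_sub (ν : Measure ℝ)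
    [IsProbabilityMeasure ν] {F : ℝ → ℝ} (hF : ∀ t, F t = ν.real (Iic t)) (hF0 : F 0 = 0)
    {ρ x y : ℝ} (hρ₀ : 0 ≤ ρ) (hρ₁ : ρ < 1) (hx : 0 < x) (hxy : ρ * x < y) (hyx : y ≤ x) :
    (ν.prod uniformAngle).real
        {p : ℝ × ℝ | x < p.1 * cos p.2 ∧ y < p.1 * cos (p.2 - arccos ρ)} =
      1 / (2 * π) * (tailI F (alphaRho ρ x y) x + tailI F (alphaRho ρ x y * x / y) y) := by
  have hν : ∀ᵐ r ∂ν, 0 < r := ae_iff.2 (by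
    simp only [not_lt]
    exact (measureReal_eq_zero_iff (measure_ne_top ν _)).1 ((hF 0).symm.trans hF0))
  have h := prod_uniformAngle_setOf_lt_mul_cos_and_lt_mul_cos_sub ν hν hρ₀ hρ₁ hx hxy hyx
  have hfin : tailLIntegral ν (alphaRho ρ x y) x + tailLIntegral ν (alphaRho ρ x y * x / y) y ≠ ⊤ :=
    fun htop => measure_ne_top (ν.prod uniformAngle) _ (by
      rw [h, htop, ENNReal.mul_top (ENNReal.inv_ne_zero.2 ENNReal.ofReal_ne_top)])
  have hα : 0 ≤ alphaRho ρ x y := sqrt_nonneg _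
  have hy : 0 < y := (mul_nonneg hρ₀ hx.le).trans_lt hxy
  rw [measureReal_def, h, ENNReal.toReal_mul, ENNReal.toReal_add (ENNReal.add_ne_top.1 hfin).1
    (ENNReal.add_ne_top.1 hfin).2, ENNReal.toReal_inv,
    ENNReal.toReal_ofReal (by positivity), tailI_eq_toReal_tailLIntegral ν hF hα,
    tailI_eq_toReal_tailLIntegral ν hF (by positivity), one_div]

theorem stmt7
    {Ω : Type*} [MeasurableSpace Ω] (μ : Measure Ω) [IsProbabilityMeasure μ]
    (R Θ : Ω → ℝ) (hRmeas : Measurable R) (hΘmeas : Measurable Θ)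
    (hIndep : ProbabilityTheory.IndepFun R Θ μ)
    (hΘlaw : Measure.map Θ μ =
      (ENNReal.ofReal (2 * Real.pi))⁻¹ • volume.restrict (Set.Ioo (-Real.pi) Real.pi))
    (F : ℝ → ℝ) (hFdist : ∀ t : ℝ, F t = (μ {ω | R ω ≤ t}).toReal)
    (hF0 : F 0 = 0) :
    ∀ ρ : ℝ, 0 ≤ ρ → ρ < 1 → ∀ x > (0 : ℝ), ∀ y : ℝ, ρ * x < y → y ≤ x →
      (μ {ω | x < R ω * Real.cos (Θ ω) ∧
          y < ρ * (R ω * Real.cos (Θ ω)) +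
            Real.sqrt (1 - ρ ^ 2) * (R ω * Real.sin (Θ ω))}).toReal =
        (1 / (2 * Real.pi)) *
          (tailI F (alphaRho ρ x y) x + tailI F (alphaRho ρ x y * x / y) y) := by
  intro ρ hρ₀ hρ₁ x hx y hxy hyx
  have : IsProbabilityMeasure (μ.map R) := Measure.isProbabilityMeasure_map hRmeas.aemeasurable
  have hevent : {ω | x < R ω * cos (Θ ω) ∧
      y < ρ * (R ω * cos (Θ ω)) + √(1 - ρ ^ 2) * (R ω * sin (Θ ω))} =
      (fun ω => (R ω, Θ ω)) ⁻¹' {p | x < p.1 * cos p.2 ∧ y < p.1 * cos (p.2 - arccos ρ)} := by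
    simp only [preimage_ofPred_eq, mul_cos_sub_arccos (by linarith) hρ₁.le]
  rw [hevent, ← measureReal_def, ← map_measureReal_apply (hRmeas.prodMk hΘmeas)
    (measurableSet_setOf_lt_mul_cos_and_lt_mul_cos_sub x y _),
    (ProbabilityTheory.indepFun_iff_map_prod_eq_prod_map_map hRmeas.aemeasurable
      hΘmeas.aemeasurable).1 hIndep, hΘlaw]
  refine measureReal_prod_uniformAngle_setOf_lt_mul_cos_and_lt_mul_cos_sub (μ.map R)
    (fun t => ?_) hF0 hρ₀ hρ₁ hx hxy hyx
  rw [hFdist, map_measureReal_apply hRmeas measurableSet_Iic, measureReal_def]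
  rfl
end

section
/- If F is a distribution function with infinite upper endpoint that belongs to the Gumbel max-domain of attraction, then 1−F is rapidly varying at infinity: for every constant C > 1, lim_{x→∞} (1−F(C·x))/(1−F(x)) = 0. -/
open MeasureTheory Filter

theorem stmt14
    (F : ℝ → ℝ) (hFmono : Monotone F) (hFlt1 : ∀ x : ℝ, F x < 1)
    (w : ℝ → ℝ) (hwpos : ∀ x : ℝ, 0 < w x)
    (hGumbel : ∀ s : ℝ,
      Tendsto (fun u => (1 - F (u + s / w u)) / (1 - F u)) atTop (nhds (Real.exp (-s)))) :
    ∀ C : ℝ, 1 < C →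
      Tendsto (fun x => (1 - F (C * x)) / (1 - F x)) atTop (nhds 0) := by
  intro C hC
  have hgpos : ∀ x : ℝ, 0 < 1 - F x := fun x => by linarith [hFlt1 x]
  have hganti : Antitone (fun x : ℝ => 1 - F x) := fun a b hab => sub_le_sub_left (hFmono hab) 1
  have hbdd : BddBelow (Set.range (fun x : ℝ => 1 - F x)) := by
    refine ⟨0, ?_⟩
    rintro y ⟨x, rfl⟩
    exact (hgpos x).le
  have hgL : Tendsto (fun x : ℝ => 1 - F x) atTop (nhds (⨅ x : ℝ, 1 - F x)) :=
    tendsto_atTop_ciInf hganti hbdd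
  have hL0 : (⨅ x : ℝ, 1 - F x) = 0 := by
    set L := ⨅ x : ℝ, 1 - F x with hLdef
    have hLnn : 0 ≤ L := le_ciInf fun x => (hgpos x).le
    rcases hLnn.lt_or_eq with hLpos | h
    · exfalso
      have h1 := hGumbel 1
      have hlow : ∀ u : ℝ, L / (1 - F u) ≤ (1 - F (u + 1 / w u)) / (1 - F u) := by
        intro u
        apply (div_le_div_iff_of_pos_right (hgpos u)).mpr
        exact ciInf_le hbdd _
      have hlim : Tendsto (fun u : ℝ => L / (1 - F u)) atTop (nhds (L / L)) :=
        tendsto_const_nhds.div hgL hLpos.ne'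
      rw [div_self hLpos.ne'] at hlim
      have : (1:ℝ) ≤ Real.exp (-1) :=
        le_of_tendsto_of_tendsto' hlim h1 hlow
      have hlt : Real.exp (-1) < 1 := Real.exp_lt_one_iff.mpr (by norm_num)
      linarith
    · exact h.symm
  have hgto0 : Tendsto (fun x : ℝ => 1 - F x) atTop (nhds 0) := hL0 ▸ hgL
  -- step: 1/w is o(u)
  have hstep : ∀ t : ℝ, 0 < t → ∀ᶠ u in atTop, t / w u < u := by
    intro t ht
    have h1 := hGumbel (-t)
    have hM : Real.exp (-(-t)) < Real.exp t + 1 := by rw [neg_neg]; linarith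
    have hev1 : ∀ᶠ u in atTop, (1 - F (u + -t / w u)) / (1 - F u) < Real.exp t + 1 :=
      h1.eventually_lt_const hM
    have hg0pos : 0 < 1 - F 0 := hgpos 0
    have hev2 : ∀ᶠ u in atTop, 1 - F u < (1 - F 0) / (Real.exp t + 1) :=
      hgto0.eventually_lt_const (by positivity)
    filter_upwards [hev1, hev2, eventually_gt_atTop (0:ℝ)] with u hu1 hu2 hu3
    by_contra hcon
    push_neg at hcon
    have hle : u + -t / w u ≤ 0 := by
      have h5 : -t / w u = -(t / w u) := by ring
      rw [h5]; linarith
    have hnum : 1 - F 0 ≤ 1 - F (u + -t / w u) := hganti hle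
    have hprod : (1 - F u) * (Real.exp t + 1) < 1 - F 0 :=
      (lt_div_iff₀ (by positivity)).mp hu2
    have hratio : (1 - F 0) / (1 - F u) ≤ (1 - F (u + -t / w u)) / (1 - F u) :=
      (div_le_div_iff_of_pos_right (hgpos u)).mpr hnum
    have hgt : Real.exp t + 1 < (1 - F 0) / (1 - F u) := by
      rw [lt_div_iff₀ (hgpos u)]
      nlinarith
    linarith
  rw [tendsto_order]
  constructor
  · intro b hb
    filter_upwards with x
    have : 0 < (1 - F (C * x)) / (1 - F x) := div_pos (hgpos (C * x)) (hgpos x)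
    linarith
  · intro b hb
    set s : ℝ := max 1 (1 - Real.log (b / 2)) with hs
    have hs1 : (1:ℝ) ≤ s := le_max_left _ _
    have hexp : Real.exp (-s) < b := by
      have hlog : -s < Real.log (b / 2) := by
        have := le_max_right 1 (1 - Real.log (b / 2))
        have : 1 - Real.log (b / 2) ≤ s := le_max_right _ _
        linarith
      have h2 : Real.exp (-s) < b / 2 := by
        calc Real.exp (-s) < Real.exp (Real.log (b / 2)) := Real.exp_lt_exp.mpr hlog
          _ = b / 2 := Real.exp_log (by linarith)
      linarith
    have ht : 0 < s / (C - 1) := div_pos (by linarith) (by linarith)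
    have hev3 := hstep _ ht
    have hev4 : ∀ᶠ x in atTop, (1 - F (x + s / w x)) / (1 - F x) < b :=
      (hGumbel s).eventually_lt_const hexp
    filter_upwards [hev3, hev4, eventually_gt_atTop (0:ℝ)] with x h3 h4 hx
    have hwx := hwpos x
    have hCpos : (0:ℝ) < C - 1 := by linarith
    have hws : s / w x < (C - 1) * x := by
      rw [div_lt_iff₀ hwx] at h3 ⊢
      rw [div_lt_iff₀ hCpos] at h3
      nlinarith
    have hcx : x + s / w x ≤ C * x := by nlinarith
    have hmono : 1 - F (C * x) ≤ 1 - F (x + s / w x) := sub_le_sub_left (hFmono hcx) 1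
    calc (1 - F (C * x)) / (1 - F x) ≤ (1 - F (x + s / w x)) / (1 - F x) :=
          (div_le_div_iff_of_pos_right (hgpos x)).mpr hmono
      _ < b := h4
end

section
/- Let C > 0, c > 0, δ > 0 and N ∈ ℝ, and let R be a positive random variable with P(R > x) = C·x^N·exp(−c·x^δ) for all sufficiently large x. Let Θ be uniformly distributed on (−π,π), independent of R, and set X := R cos Θ. Then P(X > u) = (1+o(1))·(C/√(2·c·δ·π))·u^{N−δ/2}·exp(−c·u^δ) as u → ∞; that is, lim_{u→∞} P(X > u)·√(2cδπ)·u^{δ/2−N}·exp(c·u^δ)/C = 1. -/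
/-!
Conditioning on `Θ`, `P(R cos Θ > u) = (2π)⁻¹ ∫_{|θ|<π/2} P(R > u / cos θ) dθ`, and for a Kotz tail
`P(R > u / cos θ) = P(R > u) · cos θ ^ (-N) · exp (-λ (cos θ ^ (-δ) - 1))` with `λ = c u ^ δ`.
The remaining integral is handled by Laplace's method: after the substitution `θ = s / √λ` the
integrand tends to `exp (-δ s² / 2)`, because `cos θ ^ (-δ) - 1 ~ δ θ² / 2`, and it is dominated by
a Gaussian, so `√λ` times the integral tends to `√(2π / δ)`.
-/

open MeasureTheory Filter Real Set Topology ProbabilityTheory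

theorem tendsto_cos_rpow_neg_sub_one_div_sq (δ : ℝ) :
    Tendsto (fun x => (cos x ^ (-δ) - 1) / x ^ 2) (𝓝[≠] 0) (𝓝 (δ / 2)) := by
  have hcos : ∀ᶠ x in 𝓝 (0 : ℝ), 0 < cos x :=
    continuousAt_const.eventually_lt continuous_cos.continuousAt (by norm_num)
  have hderiv : ∀ᶠ x in 𝓝 (0 : ℝ),
      HasDerivAt (fun x => cos x ^ (-δ) - 1) (δ * cos x ^ (-δ - 1) * sin x) x := by
    filter_upwards [hcos] with x hx
    exact (((hasDerivAt_cos x).rpow_const (Or.inl hx.ne')).sub_const 1).congr_deriv (by ring)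
  have hcont : ∀ p : ℝ, ContinuousAt (fun x => cos x ^ p) 0 := fun p =>
    continuous_cos.continuousAt.rpow_const (Or.inl (by norm_num))
  have hquot : Tendsto (fun x => δ / 2 * cos x ^ (-δ - 1) * sinc x) (𝓝 0) (𝓝 (δ / 2)) := by
    simpa using (((hcont (-δ - 1)).tendsto.const_mul (δ / 2)).mul
      continuous_sinc.continuousAt.tendsto)
  refine HasDerivAt.lhopital_zero_nhdsNE (eventually_nhdsWithin_of_eventually_nhds hderiv)
    (Eventually.of_forall fun x => hasDerivAt_pow 2 x) ?_ ?_ ?_ ?_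
  · filter_upwards [self_mem_nhdsWithin] with x hx
    simpa using hx
  · exact tendsto_nhdsWithin_of_tendsto_nhds
      (by simpa using (hcont (-δ)).tendsto.sub_const 1)
  · exact tendsto_nhdsWithin_of_tendsto_nhds (by simpa using (continuous_pow 2).tendsto (0:ℝ))
  · refine (hquot.mono_left nhdsWithin_le_nhds).congr' ?_
    filter_upwards [self_mem_nhdsWithin] with x hx
    rw [sinc_of_ne_zero hx]
    field_simp
    ring

noncomputable def cosKernel (N δ a θ : ℝ) : ℝ := cos θ ^ (-N) * exp (-a * (cos θ ^ (-δ) - 1))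

theorem tendsto_cosKernel_div_sqrt (N δ s : ℝ) :
    Tendsto (fun a => cosKernel N δ a (s / √a)) atTop (𝓝 (exp (-(δ / 2) * s ^ 2))) := by
  set h := Function.update (fun x => (cos x ^ (-δ) - 1) / x ^ 2) 0 (δ / 2)
  have hh : ContinuousAt h 0 :=
    continuousAt_update_same.mpr (tendsto_cos_rpow_neg_sub_one_div_sq δ)
  have hsq : ∀ x, cos x ^ (-δ) - 1 = x ^ 2 * h x := by
    intro x
    rcases eq_or_ne x 0 with rfl | hx
    · simp
    · simp [h, hx]
      field_simp
  have hx : Tendsto (fun a => s / √a) atTop (𝓝 0) :=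
    tendsto_const_nhds.div_atTop tendsto_sqrt_atTop
  have hcos : Tendsto (fun x => cos x ^ (-N)) (𝓝 0) (𝓝 1) := by
    simpa using ((continuous_cos.continuousAt (x := 0)).rpow_const (p := -N)
      (Or.inl (by norm_num))).tendsto
  have hexp : Tendsto (fun x => exp (-(s ^ 2 * h x))) (𝓝 0) (𝓝 (exp (-(δ / 2) * s ^ 2))) := by
    have := (continuous_exp.tendsto _).comp (hh.tendsto.const_mul (s ^ 2)).neg
    simpa [Function.comp_def, h, mul_comm] using this
  refine ((hcos.mul hexp).comp hx).congr' ?_ |>.trans (by rw [one_mul])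
  filter_upwards [eventually_gt_atTop 0] with a ha
  simp only [Function.comp_apply, cosKernel, hsq (s / √a), div_pow, sq_sqrt ha.le]
  congr 2
  field_simp

theorem mul_neg_log_le_rpow_neg_sub_one {x : ℝ} (hx : 0 < x) (δ : ℝ) :
    δ * -log x ≤ x ^ (-δ) - 1 := by
  rw [rpow_def_of_pos hx, show log x * -δ = δ * -log x by ring]
  linarith [add_one_le_exp (δ * -log x)]

theorem mul_sq_le_neg_log_cos {θ : ℝ} (hθ : θ ∈ Ioo (-(π / 2)) (π / 2)) :
    2 / π ^ 2 * θ ^ 2 ≤ -log (cos θ) := by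
  have hcos := cos_pos_of_mem_Ioo hθ
  have hθπ : |θ| ≤ π := by
    rw [abs_le]; constructor <;> linarith [hθ.1, hθ.2, pi_pos]
  linarith [log_le_sub_one_of_pos hcos, cos_le_one_sub_mul_cos_sq hθπ]

theorem cosKernel_nonneg (N δ a : ℝ) {θ : ℝ} (hθ : 0 ≤ cos θ) : 0 ≤ cosKernel N δ a θ :=
  mul_nonneg (rpow_nonneg hθ _) (exp_pos _).le

theorem cosKernel_le {N δ a θ : ℝ} (hδ : 0 ≤ δ) (ha : 0 ≤ a) (hN : 2 * N ≤ δ * a)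
    (hθ : θ ∈ Ioo (-(π / 2)) (π / 2)) :
    cosKernel N δ a θ ≤ exp (-(δ / π ^ 2) * (a * θ ^ 2)) := by
  have hcos := cos_pos_of_mem_Ioo hθ
  have hL : 0 ≤ -log (cos θ) := neg_nonneg.mpr (log_nonpos hcos.le (cos_le_one θ))
  have hA := mul_neg_log_le_rpow_neg_sub_one hcos δ
  have hθL := mul_sq_le_neg_log_cos hθ
  have hcosN : cos θ ^ (-N) = exp (N * -log (cos θ)) := by
    rw [rpow_def_of_pos hcos]; ring_nf
  rw [cosKernel, hcosN, ← exp_add, exp_le_exp]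
  -- `N L ≤ (δ a / 2) L ≤ (a / 2) (cos θ ^ (-δ) - 1)` for `L = -log (cos θ) ≥ 0`
  linear_combination (1 / 2) * mul_le_mul_of_nonneg_right hN hL +
    mul_le_mul_of_nonneg_left hA ha + (1 / 2) * mul_le_mul_of_nonneg_left hθL (mul_nonneg ha hδ)

theorem measurable_cosKernel (N δ a : ℝ) : Measurable (cosKernel N δ a) := by
  unfold cosKernel; fun_prop

theorem tendsto_sqrt_mul_integral_cosKernel {δ : ℝ} (hδ : 0 < δ) (N : ℝ) :
    Tendsto (fun a => √a * ∫ θ in Ioo (-(π / 2)) (π / 2), cosKernel N δ a θ) atTop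
      (𝓝 √(2 * π / δ)) := by
  set I := Ioo (-(π / 2)) (π / 2)
  have hI : I ∈ 𝓝 0 := Ioo_mem_nhds (by linarith [pi_pos]) (by linarith [pi_pos])
  have hrescale : ∀ a > 0, √a * ∫ θ in I, cosKernel N δ a θ =
      ∫ s, I.indicator (cosKernel N δ a) (s / √a) := by
    intro a ha
    rw [Measure.integral_comp_div, integral_indicator measurableSet_Ioo,
      abs_of_pos (sqrt_pos.mpr ha), smul_eq_mul]
  have hgauss : ∫ s, exp (-(δ / 2) * s ^ 2) = √(2 * π / δ) := by
    rw [integral_gaussian]; congr 1; field_simp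
  rw [← hgauss]
  refine (tendsto_integral_filter_of_dominated_convergence
    (F := fun a s => I.indicator (cosKernel N δ a) (s / √a)) (fun s => exp (-(δ / π ^ 2) * s ^ 2))
    ?_ ?_ (integrable_exp_neg_mul_sq (by positivity)) ?_).congr' ?_
  · exact Eventually.of_forall fun a =>
      ((measurable_cosKernel N δ a).indicator measurableSet_Ioo |>.comp
        (measurable_id.div_const _)).aestronglyMeasurable
  · filter_upwards [eventually_gt_atTop 0, eventually_ge_atTop (2 * N / δ)] with a ha haN
    refine Eventually.of_forall fun s => ?_
    by_cases hs : s / √a ∈ I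
    · rw [indicator_of_mem hs, norm_of_nonneg (cosKernel_nonneg _ _ _ (cos_pos_of_mem_Ioo hs).le)]
      convert cosKernel_le hδ.le ha.le (by rwa [div_le_iff₀' hδ] at haN) hs using 3
      rw [div_pow, sq_sqrt ha.le]; field_simp
    · rw [indicator_of_notMem hs, norm_zero]; positivity
  · refine Eventually.of_forall fun s => (tendsto_cosKernel_div_sqrt N δ s).congr' ?_
    filter_upwards [(tendsto_const_nhds.div_atTop tendsto_sqrt_atTop).eventually_mem hI] with a ha
    exact (indicator_of_mem ha (cosKernel N δ a)).symm
  · filter_upwards [eventually_gt_atTop 0] with a ha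
    exact (hrescale a ha).symm

theorem measure_mem_eq_lintegral_of_indepFun {Ω α β : Type*} [MeasurableSpace Ω]
    [MeasurableSpace α] [MeasurableSpace β] {μ : Measure Ω} [IsFiniteMeasure μ]
    {X : Ω → α} {Y : Ω → β} (hX : Measurable X) (hY : Measurable Y) (hXY : IndepFun X Y μ)
    {S : Set (α × β)} (hS : MeasurableSet S) :
    μ {ω | (X ω, Y ω) ∈ S} = ∫⁻ y, μ {ω | (X ω, y) ∈ S} ∂(μ.map Y) := by
  have hmap : μ.map (fun ω => (X ω, Y ω)) = (μ.map X).prod (μ.map Y) :=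
    (indepFun_iff_map_prod_eq_prod_map_map hX.aemeasurable hY.aemeasurable).1 hXY
  calc μ {ω | (X ω, Y ω) ∈ S} = μ.map (fun ω => (X ω, Y ω)) S :=
        (Measure.map_apply (hX.prodMk hY) hS).symm
    _ = ∫⁻ y, μ.map X ((fun x => (x, y)) ⁻¹' S) ∂(μ.map Y) := by
        rw [hmap, Measure.prod_apply_symm hS]
    _ = ∫⁻ y, μ {ω | (X ω, y) ∈ S} ∂(μ.map Y) := by
        simp_rw [Measure.map_apply hX (measurable_prodMk_right hS)]
        rfl

theorem measure_lt_mul_cos_eq_indicator {Ω : Type*} [MeasurableSpace Ω] (μ : Measure Ω)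
    {R : Ω → ℝ} (hR : ∀ ω, 0 ≤ R ω) {u : ℝ} (hu : 0 < u) {θ : ℝ} (hθ : θ ∈ Ioo (-π) π) :
    μ {ω | u < R ω * cos θ} =
      (Ioo (-(π / 2)) (π / 2)).indicator (fun θ => μ {ω | u / cos θ < R ω}) θ := by
  by_cases hθ' : θ ∈ Ioo (-(π / 2)) (π / 2)
  · have hcos := cos_pos_of_mem_Ioo hθ'
    simp_rw [indicator_of_mem hθ', div_lt_iff₀ hcos]
  · have hcos : cos θ ≤ 0 := by
      rw [← cos_abs]
      refine cos_nonpos_of_pi_div_two_le_of_le ?_ ?_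
      · by_contra h
        exact hθ' (abs_lt.mp (not_le.mp h))
      · linarith [abs_lt.mpr hθ, pi_pos]
    rw [indicator_of_notMem hθ', ← measure_empty (μ := μ)]
    congr 1
    ext ω
    simpa using mul_nonpos_of_nonneg_of_nonpos (hR ω) hcos |>.trans hu.le

theorem measure_lt_mul_cos_eq_lintegral {Ω : Type*} [MeasurableSpace Ω] {μ : Measure Ω}
    [IsFiniteMeasure μ] {R Θ : Ω → ℝ} (hR : Measurable R) (hΘ : Measurable Θ)
    (hRΘ : IndepFun R Θ μ)
    (hΘlaw : μ.map Θ = (ENNReal.ofReal (2 * π))⁻¹ • volume.restrict (Ioo (-π) π))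
    (hRnonneg : ∀ ω, 0 ≤ R ω) {u : ℝ} (hu : 0 < u) :
    μ {ω | u < R ω * cos (Θ ω)} =
      (ENNReal.ofReal (2 * π))⁻¹ * ∫⁻ θ in Ioo (-(π / 2)) (π / 2), μ {ω | u / cos θ < R ω} := by
  have hS : MeasurableSet {p : ℝ × ℝ | u < p.1 * cos p.2} :=
    measurableSet_lt measurable_const (by fun_prop)
  have hsub : Ioo (-(π / 2)) (π / 2) ⊆ Ioo (-π) π :=
    Ioo_subset_Ioo (by linarith [pi_pos]) (by linarith [pi_pos])
  refine (measure_mem_eq_lintegral_of_indepFun hR hΘ hRΘ hS).trans ?_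
  simp only [mem_ofPred_eq]
  rw [hΘlaw, lintegral_smul_measure,
    setLIntegral_congr_fun measurableSet_Ioo
      (fun θ hθ => measure_lt_mul_cos_eq_indicator μ hRnonneg hu hθ),
    lintegral_indicator measurableSet_Ioo, Measure.restrict_restrict measurableSet_Ioo,
    inter_eq_self_of_subset_left hsub, smul_eq_mul]

theorem measureReal_lt_mul_cos_eq_integral {Ω : Type*} [MeasurableSpace Ω] {μ : Measure Ω}
    [IsFiniteMeasure μ] {R Θ : Ω → ℝ} (hR : Measurable R) (hΘ : Measurable Θ)
    (hRΘ : IndepFun R Θ μ)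
    (hΘlaw : μ.map Θ = (ENNReal.ofReal (2 * π))⁻¹ • volume.restrict (Ioo (-π) π))
    (hRnonneg : ∀ ω, 0 ≤ R ω) {F : ℝ → ℝ} (hF : Measurable F) {x₀ : ℝ}
    (htail : ∀ x, x₀ ≤ x → μ.real {ω | x < R ω} = F x) {u : ℝ} (hu : 0 < u) (hx₀u : x₀ ≤ u) :
    μ.real {ω | u < R ω * cos (Θ ω)} = (2 * π)⁻¹ * ∫ θ in Ioo (-(π / 2)) (π / 2), F (u / cos θ) := by
  have htail' : ∀ θ ∈ Ioo (-(π / 2)) (π / 2), μ.real {ω | u / cos θ < R ω} = F (u / cos θ) :=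
    fun θ hθ => htail _ (hx₀u.trans (le_div_self hu.le (cos_pos_of_mem_Ioo hθ) (cos_le_one θ)))
  rw [integral_eq_lintegral_of_nonneg_ae, measureReal_def,
    measure_lt_mul_cos_eq_lintegral hR hΘ hRΘ hΘlaw hRnonneg hu, ENNReal.toReal_mul,
    ENNReal.toReal_inv, ENNReal.toReal_ofReal (by positivity)]
  · congr 2
    refine setLIntegral_congr_fun measurableSet_Ioo fun θ hθ => ?_
    rw [← htail' θ hθ, ofReal_measureReal]
  · filter_upwards [ae_restrict_mem measurableSet_Ioo] with θ hθ
    exact htail' θ hθ ▸ measureReal_nonneg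
  · exact (hF.comp (measurable_const.div measurable_cos)).aestronglyMeasurable

noncomputable def kotzTail (C c δ N x : ℝ) : ℝ := C * x ^ N * exp (-c * x ^ δ)

theorem kotzTail_div_cos (C c δ N : ℝ) {u θ : ℝ} (hu : 0 < u) (hθ : 0 < cos θ) :
    kotzTail C c δ N (u / cos θ) = kotzTail C c δ N u * cosKernel N δ (c * u ^ δ) θ := by
  have hdiv : ∀ p : ℝ, (u / cos θ) ^ p = u ^ p * cos θ ^ (-p) := fun p => by
    rw [div_rpow hu.le hθ.le, rpow_neg hθ.le, div_eq_mul_inv]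
  simp only [kotzTail, cosKernel, hdiv]
  rw [show -c * (u ^ δ * cos θ ^ (-δ)) = -c * u ^ δ + -(c * u ^ δ) * (cos θ ^ (-δ) - 1) by ring,
    exp_add]
  ring

theorem stmt16
    {Ω : Type*} [MeasurableSpace Ω] (μ : Measure Ω) [IsProbabilityMeasure μ]
    (R Θ : Ω → ℝ) (hRmeas : Measurable R) (hΘmeas : Measurable Θ)
    (hIndep : ProbabilityTheory.IndepFun R Θ μ)
    (hΘlaw : Measure.map Θ μ =
      (ENNReal.ofReal (2 * Real.pi))⁻¹ • volume.restrict (Set.Ioo (-Real.pi) Real.pi))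
    (hRpos : ∀ ω : Ω, 0 < R ω)
    (C c δ N : ℝ) (hC : 0 < C) (hc : 0 < c) (hδ : 0 < δ)
    (hRtail : ∀ᶠ x in atTop, (μ {ω | x < R ω}).toReal = C * x ^ N * Real.exp (-c * x ^ δ)) :
    Tendsto (fun u => (μ {ω | u < R ω * Real.cos (Θ ω)}).toReal *
        Real.sqrt (2 * c * δ * Real.pi) * u ^ (δ / 2 - N) * Real.exp (c * u ^ δ) / C)
      atTop (nhds 1) := by
  obtain ⟨x₀, htail⟩ := eventually_atTop.1 hRtail
  have hlim := ((tendsto_sqrt_mul_integral_cosKernel hδ N).comp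
    ((tendsto_rpow_atTop hδ).const_mul_atTop hc)).const_mul ((2 * π)⁻¹ * √(2 * δ * π))
  have hone : (2 * π)⁻¹ * √(2 * δ * π) * √(2 * π / δ) = 1 := by
    rw [mul_assoc, ← sqrt_mul (by positivity), show 2 * δ * π * (2 * π / δ) = (2 * π) ^ 2 by
      field_simp, sqrt_sq (by positivity), inv_mul_cancel₀ (by positivity)]
  rw [hone] at hlim
  refine hlim.congr' ?_
  filter_upwards [eventually_ge_atTop x₀, eventually_gt_atTop 0] with u hx₀u hu
  rw [← measureReal_def, measureReal_lt_mul_cos_eq_integral (F := kotzTail C c δ N) hRmeas hΘmeas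
      hIndep hΘlaw (fun ω => (hRpos ω).le) (by unfold kotzTail; fun_prop) htail hu hx₀u,
    setIntegral_congr_fun measurableSet_Ioo
      (fun θ hθ => kotzTail_div_cos C c δ N hu (cos_pos_of_mem_Ioo hθ)),
    integral_const_mul]
  have hpow : √(2 * c * δ * π) * u ^ (δ / 2 - N) * u ^ N = √(2 * δ * π) * √(c * u ^ δ) := by
    rw [mul_assoc, ← rpow_add hu, sub_add_cancel, sqrt_mul hc.le, sqrt_eq_rpow (u ^ δ),
      ← rpow_mul hu.le, show 2 * c * δ * π = 2 * δ * π * c by ring, sqrt_mul (by positivity)]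
    ring_nf
  set I := ∫ θ in Ioo (-(π / 2)) (π / 2), cosKernel N δ (c * u ^ δ) θ
  simp only [Function.comp_apply, kotzTail, neg_mul, exp_neg]
  calc (2 * π)⁻¹ * √(2 * δ * π) * (√(c * u ^ δ) * I)
      = (2 * π)⁻¹ * I * (√(2 * c * δ * π) * u ^ (δ / 2 - N) * u ^ N) := by rw [hpow]; ring
    _ = _ := by field_simp
end

section
/- Under the representation of F and Assumption A1, there exist a constant C > 0 and u₀ such that for all u ≥ u₀ and all x ≥ 0: |(1−F(u + x/w(u)))/(1−F(u)) − exp(−x)| ≤ C·(A₁(u)·B₁(x) + exp(−x)·A₂(u)·B₂(x)). -/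
open MeasureTheory Filter

theorem stmt17
    (F : ℝ → ℝ) (hFlt1 : ∀ x : ℝ, F x < 1)
    (w : ℝ → ℝ) (hwpos : ∀ x : ℝ, 0 < w x)
    (d Fstar : ℝ → ℝ) (z₀ : ℝ)
    (hFstar : ∀ x : ℝ, Fstar x = 1 - Real.exp (-(∫ s in z₀..x, w s)))
    (hdpos : ∀ x : ℝ, 0 < d x) (dlim : ℝ) (hdlim_pos : 0 < dlim)
    (hdlim : Tendsto d atTop (nhds dlim))
    (hrep : ∀ᶠ x in atTop, 1 - F x = d x * (1 - Fstar x))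
    (A₁ A₂ B₁ B₂ : ℝ → ℝ)
    (hA₁meas : Measurable A₁) (hA₂meas : Measurable A₂)
    (hB₁meas : Measurable B₁) (hB₂meas : Measurable B₂)
    (hA₁pos : ∀ u : ℝ, 0 < A₁ u) (hA₂pos : ∀ u : ℝ, 0 < A₂ u)
    (hB₁pos : ∀ x : ℝ, 0 < B₁ x) (hB₂pos : ∀ x : ℝ, 0 < B₂ x)
    (hA₁lim : Tendsto A₁ atTop (nhds 0)) (hA₂lim : Tendsto A₂ atTop (nhds 0))
    (hB₁bdd : ∀ K : ℝ, ∃ M : ℝ, ∀ x ∈ Set.Icc (0 : ℝ) K, B₁ x ≤ M)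
    (hB₂bdd : ∀ K : ℝ, ∃ M : ℝ, ∀ x ∈ Set.Icc (0 : ℝ) K, B₂ x ≤ M)
    (hA1 : ∃ u₁ : ℝ, ∀ u ≥ u₁, ∀ x ≥ (0 : ℝ),
      |(1 - Fstar (u + x / w u)) / (1 - Fstar u) - Real.exp (-x)| ≤ A₁ u * B₁ x ∧
      |d (u + x / w u) - d u| ≤ A₂ u * B₂ x)
    :
    ∃ C > (0 : ℝ), ∃ u₀ : ℝ, ∀ u ≥ u₀, ∀ x ≥ (0 : ℝ),
      |(1 - F (u + x / w u)) / (1 - F u) - Real.exp (-x)| ≤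
        C * (A₁ u * B₁ x + Real.exp (-x) * A₂ u * B₂ x) := by

  obtain ⟨u₁, hu₁⟩ := hA1
  have hIoo : ∀ᶠ u in atTop, d u ∈ Set.Ioo (dlim / 2) (3 * dlim / 2) :=
    hdlim (Ioo_mem_nhds (by linarith) (by linarith))
  obtain ⟨N, hN⟩ := eventually_atTop.mp (hrep.and hIoo)
  refine ⟨max 3 (2 / dlim), lt_of_lt_of_le (by norm_num) (le_max_left _ _),
    max u₁ N, fun u hu x hx => ?_⟩
  have huu₁ : u ≥ u₁ := le_trans (le_max_left _ _) hu
  have huN : u ≥ N := le_trans (le_max_right _ _) hu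
  set y := u + x / w u with hy
  have hyu : u ≤ y := by
    have : 0 ≤ x / w u := div_nonneg hx (hwpos u).le
    rw [hy]; linarith
  have hyN : y ≥ N := le_trans huN hyu
  obtain ⟨hrepu, hdu1, hdu2⟩ := hN u huN
  obtain ⟨hrepy, hdy1, hdy2⟩ := hN y hyN
  obtain ⟨h1, h2⟩ := hu₁ u huu₁ x hx
  have hEu : (0:ℝ) < 1 - Fstar u := by
    rw [hFstar]; have := Real.exp_pos (-(∫ s in z₀..u, w s)); linarith
  have hEy : (0:ℝ) < 1 - Fstar y := by
    rw [hFstar]; have := Real.exp_pos (-(∫ s in z₀..y, w s)); linarith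
  have hFu : (0:ℝ) < 1 - F u := by linarith [hFlt1 u]
  have hbu : (0:ℝ) < d u := hdpos u
  have hratio : (1 - F y) / (1 - F u)
      = (d y / d u) * ((1 - Fstar y) / (1 - Fstar u)) := by
    rw [hrepu, hrepy, div_mul_div_comm]
  set P := (1 - Fstar y) / (1 - Fstar u) with hP
  set e := Real.exp (-x) with he
  have hepos : 0 < e := Real.exp_pos _
  have hkey : (d y / d u) * P - e
      = (d y / d u) * (P - e) + (e / d u) * (d y - d u) := by
    field_simp
    ring
  have habs : |(d y / d u) * P - e|
      ≤ (d y / d u) * |P - e| + (e / d u) * |d y - d u| := by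
    rw [hkey]
    refine le_trans (abs_add_le _ _) ?_
    rw [abs_mul, abs_mul, abs_of_nonneg (div_nonneg (hdpos y).le hbu.le),
      abs_of_nonneg (div_nonneg hepos.le hbu.le)]
  have hd_ratio : d y / d u ≤ 3 := by
    rw [div_le_iff₀ hbu]
    nlinarith
  have hinv : e / d u ≤ e * (2 / dlim) := by
    rw [div_eq_mul_inv]
    refine mul_le_mul_of_nonneg_left ?_ hepos.le
    rw [inv_le_comm₀ (by linarith) (by positivity)]
    have : (2 / dlim)⁻¹ = dlim / 2 := by
      rw [inv_div]
    rw [this]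
    linarith
  have hterm1 : (d y / d u) * |P - e| ≤ 3 * (A₁ u * B₁ x) :=
    mul_le_mul hd_ratio h1 (abs_nonneg _) (by norm_num)
  have hterm2 : (e / d u) * |d y - d u| ≤ (e * (2 / dlim)) * (A₂ u * B₂ x) :=
    mul_le_mul hinv h2 (abs_nonneg _) (mul_nonneg hepos.le (by positivity : (0:ℝ) ≤ 2 / dlim))
  rw [hratio]
  refine le_trans habs ?_
  have hAB₁ : 0 ≤ A₁ u * B₁ x := mul_nonneg (hA₁pos u).le (hB₁pos x).le
  have hAB₂ : 0 ≤ e * A₂ u * B₂ x := mul_nonneg (mul_nonneg hepos.le (hA₂pos u).le) (hB₂pos x).le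
  have hC1 : (3:ℝ) ≤ max 3 (2 / dlim) := le_max_left _ _
  have hC2 : 2 / dlim ≤ max 3 (2 / dlim) := le_max_right _ _
  have : (e * (2 / dlim)) * (A₂ u * B₂ x) ≤ max 3 (2 / dlim) * (e * A₂ u * B₂ x) := by
    have h2d : 0 < 2 / dlim := by positivity
    nlinarith [mul_pos (hA₂pos u) (hB₂pos x)]
  have h3 : 3 * (A₁ u * B₁ x) ≤ max 3 (2 / dlim) * (A₁ u * B₁ x) :=
    mul_le_mul_of_nonneg_right hC1 hAB₁
  calc (d y / d u) * |P - e| + (e / d u) * |d y - d u|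
      ≤ max 3 (2 / dlim) * (A₁ u * B₁ x) + max 3 (2 / dlim) * (e * A₂ u * B₂ x) := by
        linarith
    _ = max 3 (2 / dlim) * (A₁ u * B₁ x + e * A₂ u * B₂ x) := by ring
end
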